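/- arXiv:math/0510296 — 5 statements merged into one kernel-verified Lean document; each statement's English description precedes it below -/
import Mathlib

section
/- Let $G$ be a group and let $a, g \in G$ be such that the normal closure of $\langle a\rangle$ in $\langle a, g\rangle$ is abelian. If $[a, g^{t_1}, g^{t_2}, \dots, g^{t_k}] = 1$ for some positive integers $t_1, \dots, t_k$, then $[a,{}_k\, g^m] = 1$ for every positive integer $m$ divisible by the least common multiple of $t_1, \dots, t_k$. -/
/-!
The normal closure `N` of `⟨a⟩` in `⟨a, g⟩` is abelian, so written additively it is a module over
`ℤ[x, x⁻¹]`, with `x` acting by `v ↦ g * v * g⁻¹`. Then `⁅v, g ^ s⁆ = (1 - x ^ s) v`, so the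
hypothesis says `(1 - x ^ t₁) ⋯ (1 - x ^ tₖ) a = 0`, and `(1 - x ^ m) ^ k` is a multiple of this
product because `1 - x ^ t` divides `1 - x ^ m` whenever `t ∣ m`.
-/

open scoped commutatorElement

/-- Iterated commutator `[x, y, y, ..., y]` with `y` repeated `k` times (`engel x y 0 = x`). -/
def engel {G : Type*} [Group G] (x y : G) : ℕ → G
  | 0 => x
  | k + 1 => ⁅engel x y k, y⁆

/-- Left-normed iterated commutator `[x, l₁, l₂, ..., lₙ]`. -/
def lcomm {G : Type*} [Group G] (x : G) (l : List G) : G :=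
  l.foldl (fun u v => ⁅u, v⁆) x

/-- `x` is a left Engel element of `G`. -/
def IsLeftEngel (G : Type*) [Group G] (x : G) : Prop :=
  ∀ a : G, ∃ k : ℕ, 0 < k ∧ engel a x k = 1

section

variable {G : Type*} [Group G]

theorem engel_succ' (x y : G) (k : ℕ) : engel x y (k + 1) = engel ⁅x, y⁆ y k := by
  induction k with
  | zero => rfl
  | succ k ih => rw [engel, ih, engel]

theorem engel_one_left (y : G) (k : ℕ) : engel 1 y k = 1 := by
  induction k with
  | zero => rfl
  | succ k ih => rw [engel, ih, commutatorElement_one_left]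

theorem map_engel {H : Type*} [Group H] (f : G →* H) (x y : G) (k : ℕ) :
    f (engel x y k) = engel (f x) (f y) k := by
  induction k with
  | zero => rfl
  | succ k ih => rw [engel, map_commutatorElement, ih, engel]

theorem engel_conj_of_commute {c y : G} (hcy : Commute c y) (x : G) (k : ℕ) :
    engel (c * x * c⁻¹) y k = c * engel x y k * c⁻¹ := by
  have hy : MulAut.conj c y = y := by rw [MulAut.conj_apply, hcy.eq, mul_inv_cancel_right]
  have := map_engel (MulAut.conj c).toMonoidHom x y k
  simp only [MulEquiv.coe_toMonoidHom, MulAut.conj_apply] at this hy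
  rw [hy] at this
  exact this.symm

theorem lcomm_cons (x y : G) (l : List G) : lcomm x (y :: l) = lcomm ⁅x, y⁆ l := rfl

namespace Subgroup

variable {N : Subgroup G} {x y z : G}

theorem commutatorElement_mem_of_mem_normalizer (hx : x ∈ N) (hz : z ∈ normalizer N) :
    ⁅x, z⁆ ∈ N := by
  rw [commutatorElement_def, mul_assoc, mul_assoc, ← mul_assoc z]
  exact mul_mem hx ((mem_normalizer_iff.mp hz x⁻¹).mp (inv_mem hx))

theorem engel_mem_of_mem_normalizer (hx : x ∈ N) (hz : z ∈ normalizer N) (k : ℕ) :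
    engel x z k ∈ N := by
  induction k with
  | zero => exact hx
  | succ k ih => exact commutatorElement_mem_of_mem_normalizer ih hz

variable [IsMulCommutative N]

theorem commutatorElement_mul_left_of_isMulCommutative (hx : x ∈ N) (hy : y ∈ N)
    (hz : z ∈ normalizer N) : ⁅x * y, z⁆ = ⁅x, z⁆ * ⁅y, z⁆ := by
  have hyz : ⁅y, z⁆ ∈ N := commutatorElement_mem_of_mem_normalizer hy hz
  have hxz : ⁅x, z⁆ ∈ N := commutatorElement_mem_of_mem_normalizer hx hz
  rw [commutatorElement_mul_left_eq_conj_mul, setLike_mul_comm hx hyz, mul_inv_cancel_right,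
    setLike_mul_comm hyz hxz]

theorem engel_mul_left_of_isMulCommutative (hx : x ∈ N) (hy : y ∈ N) (hz : z ∈ normalizer N)
    (k : ℕ) : engel (x * y) z k = engel x z k * engel y z k := by
  induction k with
  | zero => rfl
  | succ k ih =>
    rw [engel, ih, commutatorElement_mul_left_of_isMulCommutative
      (engel_mem_of_mem_normalizer hx hz k) (engel_mem_of_mem_normalizer hy hz k) hz]
    rfl

/-- Additively: `1 - x ^ q` is a multiple of `1 - x`, for `x` acting as conjugation by `h`. -/
theorem engel_commutatorElement_pow_eq_one {u h : G} (hu : u ∈ N) (hh : h ∈ normalizer N)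
    (hz : z ∈ normalizer N) (hhz : Commute h z) {k : ℕ} (h₁ : engel ⁅u, h⁆ z k = 1) (q : ℕ) :
    engel ⁅u, h ^ q⁆ z k = 1 := by
  induction q with
  | zero => rw [pow_zero, commutatorElement_one_right, engel_one_left]
  | succ q ih =>
    have hconj : h ^ q * ⁅u, h⁆ * (h ^ q)⁻¹ ∈ N :=
      (mem_normalizer_iff.mp (pow_mem hh q) _).mp (commutatorElement_mem_of_mem_normalizer hu hh)
    rw [pow_succ, commutatorElement_mul_right_eq_mul_conj, mul_assoc _ (h ^ q), mul_assoc,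
      engel_mul_left_of_isMulCommutative
        (commutatorElement_mem_of_mem_normalizer hu (pow_mem hh q)) hconj hz,
      engel_conj_of_commute (hhz.pow_left q), h₁, ih, mul_one, one_mul, mul_inv_cancel]

theorem engel_pow_eq_one_of_lcomm_eq_one {g : G} (hg : g ∈ normalizer N) {m : ℕ} (t : List ℕ)
    (hdvd : ∀ i ∈ t, i ∣ m) {u : G} (hu : u ∈ N) (h : lcomm u (t.map (g ^ ·)) = 1) :
    engel u (g ^ m) t.length = 1 := by
  induction t generalizing u with
  | nil => exact h
  | cons s t ih =>
    rw [List.map_cons, lcomm_cons] at h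
    obtain ⟨q, rfl⟩ := hdvd s List.mem_cons_self
    have hgs : g ^ s ∈ normalizer N := pow_mem hg s
    have hs : engel ⁅u, g ^ s⁆ (g ^ (s * q)) t.length = 1 :=
      ih (fun i hi => hdvd i (List.mem_cons_of_mem s hi))
        (commutatorElement_mem_of_mem_normalizer hu hgs) h
    rw [List.length_cons, engel_succ', pow_mul]
    rw [pow_mul] at hs
    exact engel_commutatorElement_pow_eq_one hu hgs (pow_mem hgs q)
      ((Commute.refl _).pow_right q) hs q

end Subgroup

/-- For `a ∈ H`, the normal closure of `⟨a⟩` in `H`, as a subgroup of `G`. -/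
def conjClosure (H : Subgroup G) (a : G) : Subgroup G :=
  Subgroup.closure {x | ∃ h ∈ H, x = h⁻¹ * a * h}

theorem self_mem_conjClosure (H : Subgroup G) (a : G) : a ∈ conjClosure H a :=
  Subgroup.subset_closure ⟨1, one_mem H, by group⟩

theorem le_normalizer_conjClosure (H : Subgroup G) (a : G) :
    H ≤ Subgroup.normalizer (conjClosure H a) := by
  refine Subgroup.le_normalizer_closure_iff.mpr ?_
  rintro h hh _ ⟨h', hh', rfl⟩
  exact Subgroup.subset_closure ⟨h' * h⁻¹, mul_mem hh' (inv_mem hh), by group⟩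

theorem isMulCommutative_conjClosure {H : Subgroup G} {a : G}
    (habel : ∀ u ∈ H, ∀ v ∈ H, Commute (u⁻¹ * a * u) (v⁻¹ * a * v)) :
    IsMulCommutative (conjClosure H a) := by
  refine Subgroup.isMulCommutative_closure ?_
  rintro _ ⟨u, hu, rfl⟩ _ ⟨v, hv, rfl⟩
  exact habel u hu v hv

end

theorem stmt_0_general {G : Type*} [Group G] (a g : G)
    (habel : ∀ u ∈ Subgroup.closure ({a, g} : Set G),
      ∀ v ∈ Subgroup.closure ({a, g} : Set G),
      Commute (u⁻¹ * a * u) (v⁻¹ * a * v))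
    (t : List ℕ)
    (h : lcomm a (t.map (fun i => g ^ i)) = 1)
    (m : ℕ) (hdvd : ∀ i ∈ t, i ∣ m) :
    engel a (g ^ m) t.length = 1 := by
  set H := Subgroup.closure ({a, g} : Set G)
  have := isMulCommutative_conjClosure habel
  have hg : g ∈ Subgroup.normalizer (conjClosure H a) :=
    le_normalizer_conjClosure H a (Subgroup.subset_closure (by simp))
  exact Subgroup.engel_pow_eq_one_of_lcomm_eq_one hg t hdvd (self_mem_conjClosure H a) h

theorem stmt_0 {G : Type*} [Group G] (a g : G)
    (habel : ∀ u ∈ Subgroup.closure ({a, g} : Set G),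
      ∀ v ∈ Subgroup.closure ({a, g} : Set G),
      Commute (u⁻¹ * a * u) (v⁻¹ * a * v))
    (t : List ℕ) (ht : t ≠ []) (htpos : ∀ i ∈ t, 0 < i)
    (h : lcomm a (t.map (fun i => g ^ i)) = 1)
    (m : ℕ) (hm : 0 < m) (hdvd : ∀ i ∈ t, i ∣ m) :
    engel a (g ^ m) t.length = 1 :=
  stmt_0_general a g habel t h m hdvd
end

section
/- Let $G$ be a group with a normal abelian subgroup $A$, let $g \in G$, and let $a_1, a_2 \in A$, $n \in \mathbb{Z}$. Then for every positive integer $k$, $[a_1 g^n, {}_k\, a_2 g^n] = 1$ if and only if $[a_1 a_2^{-1}, {}_k\, g^n] = 1$. -/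
open scoped commutatorElement

/-!
Since `A` is abelian and normal, `G` acts on `A` by conjugation through `G ⧸ A`, so for
`x ∈ A` the commutator `⁅x, a * h⁆` with `a ∈ A` equals `⁅x, h⁆`. The first commutator
`⁅a₁ * h, a₂ * h⁆` is computed directly to be `⁅a₁ * a₂⁻¹, h⁆ ∈ A`; from then on every entry
of the sequence lies in `A`, so taking its commutator with `a₂ * h` is the same as with `h`.
-/

section

variable {G : Type*} [Group G] {A : Subgroup G}

theorem engel_mem (hA : A.Normal) {x : G} (hx : x ∈ A) (y : G) (k : ℕ) : engel x y k ∈ A := by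
  induction k with
  | zero => exact hx
  | succ k ih =>
    exact Subgroup.commutator_le_left A ⊤
      (Subgroup.commutator_mem_commutator ih (Subgroup.mem_top y))

variable (hA : A.Normal) (hab : ∀ u ∈ A, ∀ v ∈ A, u * v = v * u)
include hA hab

theorem commutatorElement_mul_right_eq_of_mem {x a : G} (hx : x ∈ A) (ha : a ∈ A) (h : G) :
    ⁅x, a * h⁆ = ⁅x, h⁆ := by
  have hcomm := hab a ha _ (hA.conj_mem _ (inv_mem hx) h)
  calc ⁅x, a * h⁆ = x * (a * (h * x⁻¹ * h⁻¹) * a⁻¹) := by simp only [commutatorElement_def]; group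
    _ = ⁅x, h⁆ := by rw [hcomm, commutatorElement_def]; group

theorem commutatorElement_mul_mul_eq {a₁ a₂ : G} (ha₁ : a₁ ∈ A) (ha₂ : a₂ ∈ A) (h : G) :
    ⁅a₁ * h, a₂ * h⁆ = ⁅a₁ * a₂⁻¹, h⁆ := by
  have hcomm := hab _ (hA.conj_mem _ (mul_mem ha₂ (inv_mem ha₁)) h) _ (inv_mem ha₂)
  calc ⁅a₁ * h, a₂ * h⁆ = a₁ * (h * (a₂ * a₁⁻¹) * h⁻¹ * a₂⁻¹) := by
        simp only [commutatorElement_def]; group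
    _ = ⁅a₁ * a₂⁻¹, h⁆ := by rw [hcomm, commutatorElement_def]; group

theorem engel_mul_mul_succ {a₁ a₂ : G} (ha₁ : a₁ ∈ A) (ha₂ : a₂ ∈ A) (h : G) (k : ℕ) :
    engel (a₁ * h) (a₂ * h) (k + 1) = engel (a₁ * a₂⁻¹) h (k + 1) := by
  induction k with
  | zero => exact commutatorElement_mul_mul_eq hA hab ha₁ ha₂ h
  | succ k ih =>
    rw [engel, ih]
    exact commutatorElement_mul_right_eq_of_mem hA hab
      (engel_mem hA (mul_mem ha₁ (inv_mem ha₂)) h _) ha₂ h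

end

theorem stmt_7 {G : Type*} [Group G] (A : Subgroup G) (hA : A.Normal)
    (hab : ∀ u ∈ A, ∀ v ∈ A, u * v = v * u)
    (g : G) (a₁ a₂ : G) (ha₁ : a₁ ∈ A) (ha₂ : a₂ ∈ A) (n : ℤ) (k : ℕ) (hk : 0 < k) :
    engel (a₁ * g ^ n) (a₂ * g ^ n) k = 1 ↔ engel (a₁ * a₂⁻¹) (g ^ n) k = 1 := by
  obtain ⟨m, rfl⟩ := Nat.exists_eq_add_one_of_ne_zero hk.ne'
  rw [engel_mul_mul_succ hA hab ha₁ ha₂]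
end

section
/- Let $G$ be a group, $x \in G$ of finite order $q$, and $s \in G$ an element such that the element $c = [[x,s],{}_{k-1}\,x]$ lies in a normal subgroup $S$ of $G$ whose elements all have order coprime to $q$. If $[[x,s],{}_k\, x] = 1$ for some positive integer $k$, then $[[x,s],{}_{k-1}\, x] = 1$. -/
/-!
Put `c = [[x, s], x, …, x]` with `k - 1` copies of `x`. The hypothesis `[c, x] = 1` says that `c`
commutes with `x`, and when `c` is itself a commutator `[u, x]` (for `k = 1`, `c = [s, x]⁻¹`) this
makes `x ↦ [u, x]` multiplicative on powers of `x`: `[u, x ^ n] = [u, x] ^ n`. Taking `n = |x|`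
gives `c ^ |x| = 1`, and an element whose order is coprime to `|x|` can only satisfy this if it
is trivial.
-/

open scoped commutatorElement

section

variable {G : Type*} [Group G]

theorem commutatorElement_pow_right_of_commute {u x : G} (h : Commute ⁅u, x⁆ x) (n : ℕ) :
    ⁅u, x ^ n⁆ = ⁅u, x⁆ ^ n :=
  calc ⁅u, x ^ n⁆ = (u * x * u⁻¹) ^ n * (x ^ n)⁻¹ := by rw [commutatorElement_def, conj_pow]
    _ = (⁅u, x⁆ * x) ^ n * (x ^ n)⁻¹ := by rw [commutatorElement_def, inv_mul_cancel_right]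
    _ = ⁅u, x⁆ ^ n := by rw [h.mul_pow, mul_inv_cancel_right]

theorem commutatorElement_pow_orderOf_eq_one {u x : G} (h : Commute ⁅u, x⁆ x) :
    ⁅u, x⁆ ^ orderOf x = 1 := by
  rw [← commutatorElement_pow_right_of_commute h, pow_orderOf_eq_one, commutatorElement_one_right]

theorem engel_pow_orderOf_eq_one {x s : G} {k : ℕ} (h : engel ⁅x, s⁆ x (k + 1) = 1) :
    engel ⁅x, s⁆ x k ^ orderOf x = 1 := by
  have hcomm : Commute (engel ⁅x, s⁆ x k) x := commutatorElement_eq_one_iff_commute.mp h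
  cases k with
  | zero =>
    change Commute ⁅x, s⁆ x at hcomm
    change ⁅x, s⁆ ^ orderOf x = 1
    rw [← commutatorElement_inv] at hcomm ⊢
    rw [inv_pow, inv_eq_one]
    exact commutatorElement_pow_orderOf_eq_one (inv_inv ⁅s, x⁆ ▸ hcomm.inv_left)
  | succ k => exact commutatorElement_pow_orderOf_eq_one hcomm

theorem eq_one_of_pow_eq_one_of_coprime_orderOf {c : G} {q : ℕ} (hc : (orderOf c).Coprime q)
    (h : c ^ q = 1) : c = 1 :=
  orderOf_eq_one_iff.mp (hc.eq_one_of_dvd (orderOf_dvd_of_pow_eq_one h))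

end

theorem stmt_9_general {G : Type*} [Group G] (x s : G) (q : ℕ) (hq : orderOf x = q)
    (S : Subgroup G)
    (hS : ∀ a ∈ S, (orderOf a).Coprime q)
    (k : ℕ)
    (hc : engel ⁅x, s⁆ x (k - 1) ∈ S)
    (h : engel ⁅x, s⁆ x k = 1) :
    engel ⁅x, s⁆ x (k - 1) = 1 := by
  cases k with
  | zero => exact h
  | succ m =>
    refine eq_one_of_pow_eq_one_of_coprime_orderOf (hS _ hc) ?_
    rw [← hq]
    exact engel_pow_orderOf_eq_one h

theorem stmt_9 {G : Type*} [Group G] (x s : G) (q : ℕ) (hq : orderOf x = q)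
    (hqpos : 0 < q)
    (S : Subgroup G) (hSn : S.Normal)
    (hS : ∀ a ∈ S, (orderOf a).Coprime q)
    (k : ℕ) (hk : 0 < k)
    (hc : engel ⁅x, s⁆ x (k - 1) ∈ S)
    (h : engel ⁅x, s⁆ x k = 1) :
    engel ⁅x, s⁆ x (k - 1) = 1 :=
  stmt_9_general x s q hq S hS k hc h
end

section
/- Let $G$ be a non-Engel group such that the set $L(G)$ of left Engel elements is a subgroup of $G$. If $x \in G \setminus L(G)$ is such that for every $y \in G \setminus L(G)$ with $y \neq x$, both $[x,{}_k\, y] \neq 1$ and $[y,{}_k\, x] \neq 1$ for all positive integers $k$, then $x^2 = 1$ and $C_G(x) = \langle x \rangle$. -/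
/-!
Adjacency at `k = 1` already says that no element outside `H` other than `x` commutes with `x`.
Let `c` commute with `x`. If `c ∉ H` then `c = x`; if `c ∈ H` then `c * x ∉ H` also commutes
with `x`, so `c * x = x` and `c = 1`. Hence `C_G(x) = {1, x}`, and applying this to `x⁻¹ ∉ H`
gives `x² = 1`.
-/

open scoped commutatorElement

theorem engel_eq_one_of_commute {G : Type*} [Group G] {a y : G} (h : Commute a y) :
    ∀ {k : ℕ}, 0 < k → engel a y k = 1
  | 1, _ => commutatorElement_eq_one_iff_commute.mpr h
  | k + 2, _ => by
    rw [engel, engel_eq_one_of_commute h k.succ_pos, commutatorElement_one_left]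

section

variable {G : Type*} [Group G] (H : Subgroup G) {x : G}

theorem eq_one_or_eq_of_commute_of_forall_not_commute (hx : x ∉ H)
    (hnc : ∀ y ∉ H, y ≠ x → ¬Commute y x) {c : G} (hc : Commute c x) : c = 1 ∨ c = x := by
  by_cases hcH : c ∈ H
  · have hcx : c * x ∉ H := fun h => hx (by simpa using H.mul_mem (H.inv_mem hcH) h)
    left
    by_contra hc1
    exact hnc (c * x) hcx (by simpa using hc1) (hc.mul_left (Commute.refl x))
  · right
    by_contra hcx
    exact hnc c hcH hcx hc

theorem sq_eq_one_of_forall_not_commute (hx : x ∉ H) (hnc : ∀ y ∉ H, y ≠ x → ¬Commute y x) :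
    x ^ 2 = 1 := by
  rcases eq_one_or_eq_of_commute_of_forall_not_commute H hx hnc (Commute.refl x).inv_left
    with h | h
  · simp [inv_eq_one.mp h]
  · rw [sq, ← inv_eq_iff_mul_eq_one, h]

theorem centralizer_singleton_eq_zpowers_of_forall_not_commute (hx : x ∉ H)
    (hnc : ∀ y ∉ H, y ≠ x → ¬Commute y x) : Subgroup.centralizer {x} = Subgroup.zpowers x := by
  refine le_antisymm (fun c hc => ?_)
    (Subgroup.zpowers_le.mpr (Subgroup.mem_centralizer_singleton_iff.mpr rfl))
  rcases eq_one_or_eq_of_commute_of_forall_not_commute H hx hnc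
      (Subgroup.mem_centralizer_singleton_iff.mp hc) with rfl | rfl
  · exact Subgroup.one_mem _
  · exact Subgroup.mem_zpowers c

end

theorem stmt_10_general {G : Type*} [Group G] (H : Subgroup G)
    (x : G) (hx : x ∉ H)
    (hadj : ∀ y : G, y ∉ H → y ≠ x →
      ∀ k : ℕ, 0 < k → engel x y k ≠ 1 ∧ engel y x k ≠ 1) :
    x ^ 2 = 1 ∧ Subgroup.centralizer {x} = Subgroup.zpowers x := by
  have hnc : ∀ y ∉ H, y ≠ x → ¬Commute y x := fun y hy hyx hc =>
    (hadj y hy hyx 1 one_pos).2 (engel_eq_one_of_commute hc one_pos)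
  exact ⟨sq_eq_one_of_forall_not_commute H hx hnc,
    centralizer_singleton_eq_zpowers_of_forall_not_commute H hx hnc⟩

theorem stmt_10 {G : Type*} [Group G] (H : Subgroup G)
    (hH : ∀ g : G, g ∈ H ↔ IsLeftEngel G g) (hne : H ≠ ⊤)
    (x : G) (hx : x ∉ H)
    (hadj : ∀ y : G, y ∉ H → y ≠ x →
      ∀ k : ℕ, 0 < k → engel x y k ≠ 1 ∧ engel y x k ≠ 1) :
    x ^ 2 = 1 ∧ Subgroup.centralizer {x} = Subgroup.zpowers x :=
  stmt_10_general H x hx hadj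
end

section
/- Let $G$ be a non-Engel group such that $L(G)$ is a subgroup of $G$. Suppose $L(G)$ is a normal abelian subgroup without elements of order $2$, and there exists an element $x \in G \setminus L(G)$ with $x^2 = 1$, $G = L(G)\langle x \rangle$, $L(G) \cap \langle x \rangle = 1$, and $g^x = g^{-1}$ for all $g \in L(G)$. Then any two distinct elements $u, v \in G \setminus L(G)$ satisfy $[u,{}_k\, v] \neq 1$ and $[v,{}_k\, u] \neq 1$ for all positive integers $k$ (i.e., the Engel graph of $G$ is complete). -/
/-!
Write every element outside `L(G) = H` as `a * x` with `a ∈ H`. Since `x` inverts the abelian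
group `H`, commutation with `b * x` squares elements of `H`, and `⁅a * x, b * x⁆ = ⁅a * b⁻¹, b * x⁆`.
Hence `[a x, ₖ b x] = (a b⁻¹) ^ 2 ^ k`, which is nontrivial for `a ≠ b` because `H` has no
elements of order `2`.
-/

open scoped commutatorElement

section Engel

variable {G : Type*} [Group G]

lemma commutatorElement_mul_self_left (c y : G) : ⁅c * y, y⁆ = ⁅c, y⁆ := by
  simp only [commutatorElement_def]
  group

lemma engel_mul_self_left_succ (c y : G) (k : ℕ) :
    engel (c * y) y (k + 1) = engel c y (k + 1) := by
  induction k with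
  | zero => exact commutatorElement_mul_self_left c y
  | succ k ih => exact congrArg (⁅·, y⁆) ih

end Engel

section Inverting

variable {G : Type*} [Group G] {H : Subgroup G} {x : G}

lemma mul_eq_inv_mul_of_conj_eq_inv (hinv : ∀ g ∈ H, x⁻¹ * g * x = g⁻¹) {g : G} (hg : g ∈ H) :
    x * g = g⁻¹ * x := by
  have h := hinv g⁻¹ (H.inv_mem hg)
  rw [inv_inv] at h
  calc x * g = x * (x⁻¹ * g⁻¹ * x) := by rw [h]
    _ = g⁻¹ * x := by group

lemma commutatorElement_mul_of_conj_eq_inv (hab : ∀ u ∈ H, ∀ v ∈ H, u * v = v * u)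
    (hinv : ∀ g ∈ H, x⁻¹ * g * x = g⁻¹) {g b : G} (hg : g ∈ H) (hb : b ∈ H) :
    ⁅g, b * x⁆ = g ^ 2 := by
  have hx : x * g⁻¹ * x⁻¹ = g := by
    rw [mul_eq_inv_mul_of_conj_eq_inv hinv (H.inv_mem hg), inv_inv, mul_inv_cancel_right]
  calc ⁅g, b * x⁆ = g * b * (x * g⁻¹ * x⁻¹) * b⁻¹ := by rw [commutatorElement_def]; group
    _ = g * (g * b) * b⁻¹ := by rw [hx, mul_assoc g b g, hab b hb g hg]
    _ = g ^ 2 := by rw [← mul_assoc, mul_inv_cancel_right, sq]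

lemma engel_mul_of_conj_eq_inv (hab : ∀ u ∈ H, ∀ v ∈ H, u * v = v * u)
    (hinv : ∀ g ∈ H, x⁻¹ * g * x = g⁻¹) {g b : G} (hg : g ∈ H) (hb : b ∈ H) (k : ℕ) :
    engel g (b * x) k = g ^ 2 ^ k := by
  induction k with
  | zero => simp [engel]
  | succ k ih =>
    rw [engel, ih, commutatorElement_mul_of_conj_eq_inv hab hinv (H.pow_mem hg _) hb,
      ← pow_mul, ← pow_succ]

lemma eq_one_of_pow_two_pow_eq_one (h2 : ∀ u ∈ H, u ^ 2 = 1 → u = 1) {c : G} (hc : c ∈ H) :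
    ∀ k : ℕ, c ^ 2 ^ k = 1 → c = 1
  | 0, h => by simpa using h
  | k + 1, h => eq_one_of_pow_two_pow_eq_one h2 hc k <|
      h2 _ (H.pow_mem hc _) (by rw [← pow_mul, ← pow_succ, h])

lemma engel_mul_ne_one (hab : ∀ u ∈ H, ∀ v ∈ H, u * v = v * u)
    (hinv : ∀ g ∈ H, x⁻¹ * g * x = g⁻¹) (h2 : ∀ u ∈ H, u ^ 2 = 1 → u = 1)
    {a b : G} (ha : a ∈ H) (hb : b ∈ H) (hne : a ≠ b) {k : ℕ} (hk : 0 < k) :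
    engel (a * x) (b * x) k ≠ 1 := by
  obtain ⟨j, rfl⟩ := Nat.exists_eq_add_of_lt hk
  have hc : a * b⁻¹ ∈ H := H.mul_mem ha (H.inv_mem hb)
  have hax : a * x = a * b⁻¹ * (b * x) := by group
  rw [Nat.zero_add, hax, engel_mul_self_left_succ, engel_mul_of_conj_eq_inv hab hinv hc hb]
  exact fun h ↦ hne (mul_inv_eq_one.mp (eq_one_of_pow_two_pow_eq_one h2 hc _ h))

lemma eq_one_or_eq_of_mem_zpowers (hx2 : x ^ 2 = 1) {y : G} (hy : y ∈ Subgroup.zpowers x) :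
    y = 1 ∨ y = x := by
  obtain ⟨n, rfl⟩ := Subgroup.mem_zpowers_iff.mp hy
  rw [zpow_eq_zpow_emod' n hx2]
  rcases Int.emod_two_eq n with h | h <;> simp [h]

lemma exists_mem_eq_mul_of_notMem [H.Normal] (htop : H ⊔ Subgroup.zpowers x = ⊤)
    (hx2 : x ^ 2 = 1) {u : G} (hu : u ∉ H) : ∃ a ∈ H, u = a * x := by
  obtain ⟨a, ha, y, hy, rfl⟩ := Subgroup.mem_sup_of_normal_left.mp (htop ▸ Subgroup.mem_top u)
  rcases eq_one_or_eq_of_mem_zpowers hx2 hy with rfl | rfl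
  · exact absurd (by simpa using ha) hu
  · exact ⟨a, ha, rfl⟩

end Inverting

theorem stmt_11_general {G : Type*} [Group G] (H : Subgroup G)
    (hnorm : H.Normal) (hab : ∀ u ∈ H, ∀ v ∈ H, u * v = v * u)
    (h2 : ∀ u ∈ H, u ^ 2 = 1 → u = 1)
    (x : G) (hx2 : x ^ 2 = 1)
    (htop : H ⊔ Subgroup.zpowers x = ⊤)
    (hinv : ∀ g ∈ H, x⁻¹ * g * x = g⁻¹) :
    ∀ u v : G, u ∉ H → v ∉ H → u ≠ v →
      ∀ k : ℕ, 0 < k → engel u v k ≠ 1 ∧ engel v u k ≠ 1 := by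
  intro u v hu hv huv k hk
  obtain ⟨a, ha, rfl⟩ := exists_mem_eq_mul_of_notMem htop hx2 hu
  obtain ⟨b, hb, rfl⟩ := exists_mem_eq_mul_of_notMem htop hx2 hv
  have hne : a ≠ b := by rintro rfl; exact huv rfl
  exact ⟨engel_mul_ne_one hab hinv h2 ha hb hne hk, engel_mul_ne_one hab hinv h2 hb ha hne.symm hk⟩

theorem stmt_11 {G : Type*} [Group G] (H : Subgroup G)
    (hH : ∀ g : G, g ∈ H ↔ IsLeftEngel G g) (hne : H ≠ ⊤)
    (hnorm : H.Normal) (hab : ∀ u ∈ H, ∀ v ∈ H, u * v = v * u)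
    (h2 : ∀ u ∈ H, u ^ 2 = 1 → u = 1)
    (x : G) (hx : x ∉ H) (hx2 : x ^ 2 = 1)
    (htop : H ⊔ Subgroup.zpowers x = ⊤) (hint : H ⊓ Subgroup.zpowers x = ⊥)
    (hinv : ∀ g ∈ H, x⁻¹ * g * x = g⁻¹) :
    ∀ u v : G, u ∉ H → v ∉ H → u ≠ v →
      ∀ k : ℕ, 0 < k → engel u v k ≠ 1 ∧ engel v u k ≠ 1 :=
  stmt_11_general H hnorm hab h2 x hx2 htop hinv
end
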